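/- Let N ∈ ℝ³ with ‖N‖ = 1 and let c ∈ ℝ³ satisfy c ×₃ N ≠ 0. Then there exists ε₀ > 0 such that for every ε with 0 < ε < ε₀, there is NO pair (u, ξ) ∈ ℝ × ℝ³ with u² + ‖ξ‖² = 1 satisfying both ‖unit ξ − N‖ ≤ ε and ‖unit(u • c − ξ) − N‖ ≤ ε. (This is the vanishing statement over the hidden and anomalous faces of Cnf[𝒦,ℝ³;3,1]: for sufficiently localized bump forms, the image of the extended Gauss map on such a face misses the support of the product form η_N × η_N, because the first two Gauss directions become nearly antipodal whenever the collision parameter u is small.) -/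

import Mathlib

open Filter Topology

noncomputable section

abbrev R3 := EuclideanSpace ℝ (Fin 3)

/-- Normalization of a vector, with the convention `unit 0 = 0`. -/
def unit (v : R3) : R3 := ‖v‖⁻¹ • v

/-- The cross product on `ℝ³ = EuclideanSpace ℝ (Fin 3)`. -/
def cross3 (v w : R3) : R3 :=
  (WithLp.equiv 2 (Fin 3 → ℝ)).symm
    (crossProduct ((WithLp.equiv 2 (Fin 3 → ℝ)) v) ((WithLp.equiv 2 (Fin 3 → ℝ)) w))

infixl:74 " ×₃ " => cross3

/-!
Put `η = u • c - ξ`. If `unit ξ` and `unit η` are `ε`-close to `N`, then `ξ` and `η` lie in the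
cone `{a | ‖a - t • N‖ ≤ ε * t for some t ≥ 0}`, which is closed under addition, so `u • c = ξ + η`
lies in it with `t = ‖ξ‖ + ‖η‖ > 0`. A nonzero vector of this cone makes with `N` an angle whose
sine is at most `ε / (1 - ε)`; for `u • c` this gives `(1 - ε) * ‖c ×₃ N‖ ≤ ε * ‖c‖`, which fails
once `ε < ‖c ×₃ N‖ / (‖c ×₃ N‖ + ‖c‖)`.
-/

lemma norm_cross3_le (v w : R3) : ‖v ×₃ w‖ ≤ ‖v‖ * ‖w‖ := by
  have h := InnerProductGeometry.norm_ofLp_crossProduct v w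
  change ‖v ×₃ w‖ = _ at h
  rw [h]
  exact mul_le_of_le_one_right (by positivity) (Real.sin_le_one _)

lemma smul_cross3 (t : ℝ) (v w : R3) : (t • v) ×₃ w = t • (v ×₃ w) := by
  simp [cross3]

lemma sub_smul_self_cross3 (v w : R3) (t : ℝ) : (v - t • w) ×₃ w = v ×₃ w := by
  simp [cross3, cross_self]

lemma norm_smul_unit (v : R3) : ‖v‖ • unit v = v := by
  rcases eq_or_ne v 0 with rfl | hv
  · simp
  · simp [unit, smul_smul, hv]

lemma ne_zero_of_norm_unit_sub_lt_one {v N : R3} (hN : ‖N‖ = 1) (h : ‖unit v - N‖ < 1) :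
    v ≠ 0 := by
  rintro rfl
  simp [unit, hN] at h

lemma norm_sub_norm_smul_le_of_norm_unit_sub_le {v N : R3} {ε : ℝ} (h : ‖unit v - N‖ ≤ ε) :
    ‖v - ‖v‖ • N‖ ≤ ε * ‖v‖ := by
  calc ‖v - ‖v‖ • N‖ = ‖‖v‖ • (unit v - N)‖ := by rw [smul_sub, norm_smul_unit]
    _ = ‖v‖ * ‖unit v - N‖ := by rw [norm_smul, norm_norm]
    _ ≤ ε * ‖v‖ := by rw [mul_comm]; gcongr

lemma one_sub_mul_le_norm_of_norm_sub_smul_le {E : Type*} [NormedAddCommGroup E]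
    [NormedSpace ℝ E] {a N : E} {t ε : ℝ} (hN : ‖N‖ = 1) (ht : 0 ≤ t)
    (h : ‖a - t • N‖ ≤ ε * t) : (1 - ε) * t ≤ ‖a‖ := by
  have : t ≤ ‖a‖ + ‖t • N - a‖ := by
    simpa [norm_smul, hN, abs_of_nonneg ht] using norm_le_norm_add_norm_sub' (t • N) a
  rw [norm_sub_rev] at this
  linarith

lemma norm_cross3_le_of_norm_sub_smul_le {a N : R3} {t ε : ℝ} (hN : ‖N‖ = 1)
    (h : ‖a - t • N‖ ≤ ε * t) : ‖a ×₃ N‖ ≤ ε * t := by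
  calc ‖a ×₃ N‖ = ‖(a - t • N) ×₃ N‖ := by rw [sub_smul_self_cross3]
    _ ≤ ‖a - t • N‖ := by simpa [hN] using norm_cross3_le (a - t • N) N
    _ ≤ ε * t := h

lemma one_sub_mul_norm_cross3_le {c N : R3} {u t ε : ℝ} (hN : ‖N‖ = 1) (hε : ε < 1)
    (ht : 0 < t) (h : ‖u • c - t • N‖ ≤ ε * t) : (1 - ε) * ‖c ×₃ N‖ ≤ ε * ‖c‖ := by
  have hε₀ : 0 ≤ ε := nonneg_of_mul_nonneg_left ((norm_nonneg _).trans h) ht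
  have hlow : (1 - ε) * t ≤ |u| * ‖c‖ := by
    simpa [norm_smul] using one_sub_mul_le_norm_of_norm_sub_smul_le hN ht.le h
  have hcross : |u| * ‖c ×₃ N‖ ≤ ε * t := by
    simpa [smul_cross3, norm_smul] using norm_cross3_le_of_norm_sub_smul_le hN h
  have hu : 0 < |u| :=
    pos_of_mul_pos_left ((by nlinarith : 0 < (1 - ε) * t).trans_le hlow) (norm_nonneg c)
  refine le_of_mul_le_mul_left ?_ hu
  calc |u| * ((1 - ε) * ‖c ×₃ N‖) = (1 - ε) * (|u| * ‖c ×₃ N‖) := by ring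
    _ ≤ (1 - ε) * (ε * t) := by gcongr
    _ = ε * ((1 - ε) * t) := by ring
    _ ≤ ε * (|u| * ‖c‖) := by gcongr
    _ = |u| * (ε * ‖c‖) := by ring

/-- Vanishing over the hidden and anomalous faces of `Cnf[𝒦,ℝ³;3,1]`: if the
tangent direction `c` is not parallel to `N`, then for all sufficiently small
`ε > 0` no collision direction `(u, ξ)` on the unit sphere has both Gauss
directions in the `ε`-disk around `N`. -/
theorem no_collision_direction_in_support (N c : R3) (hN : ‖N‖ = 1)
    (hc : c ×₃ N ≠ 0) :
    ∃ ε₀ > 0, ∀ ε : ℝ, 0 < ε → ε < ε₀ →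
      ¬ ∃ (u : ℝ) (ξ : R3), u ^ 2 + ‖ξ‖ ^ 2 = 1 ∧
          ‖unit ξ - N‖ ≤ ε ∧ ‖unit (u • c - ξ) - N‖ ≤ ε := by
  have hcN : 0 < ‖c ×₃ N‖ := norm_pos_iff.mpr hc
  refine ⟨‖c ×₃ N‖ / (‖c ×₃ N‖ + ‖c‖), by positivity, ?_⟩
  rintro ε - hεε₀ ⟨u, ξ, -, hξ, hη⟩
  have hε₁ : ε < 1 := hεε₀.trans_le <| div_le_one_of_le₀ (by simp) (by positivity)
  have hξ₀ : ξ ≠ 0 := ne_zero_of_norm_unit_sub_lt_one hN (hξ.trans_lt hε₁)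
  have hcone : ‖u • c - (‖ξ‖ + ‖u • c - ξ‖) • N‖ ≤ ε * (‖ξ‖ + ‖u • c - ξ‖) :=
    calc ‖u • c - (‖ξ‖ + ‖u • c - ξ‖) • N‖
        = ‖(ξ - ‖ξ‖ • N) + (u • c - ξ - ‖u • c - ξ‖ • N)‖ := by rw [add_smul]; abel_nf
      _ ≤ ε * ‖ξ‖ + ε * ‖u • c - ξ‖ := norm_add_le_of_le
          (norm_sub_norm_smul_le_of_norm_unit_sub_le hξ)
          (norm_sub_norm_smul_le_of_norm_unit_sub_le hη)
      _ = ε * (‖ξ‖ + ‖u • c - ξ‖) := by ring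
  have key := one_sub_mul_norm_cross3_le hN hε₁
    (add_pos_of_pos_of_nonneg (norm_pos_iff.mpr hξ₀) (norm_nonneg _)) hcone
  rw [lt_div_iff₀ (by positivity)] at hεε₀
  linarith

end
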